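/- arXiv:1501.00600 — 4 statements merged into one kernel-verified Lean document; each statement's English description precedes it below -/
import Mathlib

section
/- Consider the 3×7 matrix A with rows (1,0,0,1,1,0,1), (0,1,0,1,0,1,1), (0,0,1,0,1,1,1). Let t = ∛2 − 1 and define p ∈ ℝ^7 by p = (t, t, t, t², t², t², t³). Then p is strictly positive, its coordinates sum to 1, and p lies in the relational model generated by A, i.e. pᵢ = Πⱼ θⱼ^{a_{ji}} with θ = (t, t, t). -/
open Real

lemma rpow_one_div_natCast_pow {x : ℝ} (hx : 0 ≤ x) {n : ℕ} (hn : n ≠ 0) :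
    (x ^ ((1 : ℝ) / n)) ^ n = x := by
  rw [one_div]; exact rpow_inv_natCast_pow hx hn

lemma prod_rpow_eq_rpow_sum {ι : Type*} [Fintype ι] {x : ℝ} (hx : 0 < x) (a : ι → ℝ) :
    ∏ j, x ^ a j = x ^ ∑ j, a j :=
  (rpow_sum_of_pos hx a Finset.univ).symm

theorem stmt_10 (t : ℝ) (ht : t = (2:ℝ) ^ ((1:ℝ)/3) - 1)
    (A : Matrix (Fin 3) (Fin 7) ℝ)
    (hA : A = !![1,0,0,1,1,0,1; 0,1,0,1,0,1,1; 0,0,1,0,1,1,1])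
    (p : Fin 7 → ℝ) (hp : p = ![t, t, t, t^2, t^2, t^2, t^3]) :
    (∀ i, 0 < p i) ∧ (∑ i, p i = 1) ∧
    ∀ i, p i = ∏ j, (![t, t, t] : Fin 3 → ℝ) j ^ A j i := by
  have ht0 : 0 < t := by
    rw [ht, sub_pos]; exact one_lt_rpow (by norm_num) (by norm_num)
  have hcube : (1 + t) ^ 3 = 2 := by
    rw [ht, add_sub_cancel]
    exact_mod_cast rpow_one_div_natCast_pow (by norm_num : (0:ℝ) ≤ 2) three_ne_zero
  have hθ : (![t, t, t] : Fin 3 → ℝ) = fun _ => t := by ext j; fin_cases j <;> rfl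
  subst hp hA
  refine ⟨fun i => ?_, ?_, fun i => ?_⟩
  · fin_cases i <;>
      simp only [Fin.zero_eta, Fin.mk_one, Fin.reduceFinMk, Matrix.cons_val] <;> positivity
  · -- 3t + 3t² + t³ = (1 + t)³ - 1
    simp only [Fin.sum_univ_seven, Matrix.cons_val]
    linear_combination hcube
  · -- θ is constant, so the product is t raised to the i-th column sum of A.
    rw [hθ, prod_rpow_eq_rpow_sum ht0]
    fin_cases i <;> norm_num [Fin.sum_univ_succ]
end

section
/- Consider the 3×5 matrix A with rows (1,1,1,0,1), (1,1,0,0,1), (1,0,0,1,1). For n ≥ 1, let θ₁⁽ⁿ⁾ = 3/(3n+4), θ₂⁽ⁿ⁾ = n/2, θ₃⁽ⁿ⁾ = 1/4, and define p⁽ⁿ⁾ ∈ ℝ^5 by pᵢ⁽ⁿ⁾ = Πⱼ (θⱼ⁽ⁿ⁾)^{a_{ji}}. Then each p⁽ⁿ⁾ is a strictly positive probability vector (coordinates sum to 1), and p⁽ⁿ⁾ converges pointwise as n → ∞ to p₀ = (1/8, 1/2, 0, 1/4, 1/8). -/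
/-!
Every exponent `A j i` is `0` or `1`, so `p n i` is the product of the `θ n j` over the rows `j`
with `A j i = 1`. Writing `L = 3n + 4`, this gives
`p n = (1/8 - 1/(2L), 1/2 - 2/L, 3/L, 1/4, 1/8 - 1/(2L))`: the `1/L` terms cancel in the sum,
are small enough for positivity once `n ≥ 1`, and vanish as `n → ∞`.
-/

open Filter Topology

noncomputable def monomialVector (n : ℕ) : Fin 5 → ℝ :=
  ![1/8 - (1/2) / (3 * n + 4), 1/2 - 2 / (3 * n + 4), 3 / (3 * n + 4), 1/4,
    1/8 - (1/2) / (3 * n + 4)]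

lemma prod_rpow_eq_monomialVector (n : ℕ) (i : Fin 5) :
    ∏ j, ![3 / (3 * (n:ℝ) + 4), (n:ℝ) / 2, 1/4] j ^
      (!![1,1,1,0,1; 1,1,0,0,1; 1,0,0,1,1] : Matrix (Fin 3) (Fin 5) ℝ) j i =
      monomialVector n i := by
  have hL : (3 * (n:ℝ) + 4) ≠ 0 := by positivity
  fin_cases i <;>
    simp [monomialVector, Fin.prod_univ_three] <;> field_simp <;> ring

lemma monomialVector_pos {n : ℕ} (hn : 1 ≤ n) (i : Fin 5) : 0 < monomialVector n i := by
  have hL : (0:ℝ) < 3 * n + 4 := by positivity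
  have hn' : (1:ℝ) ≤ n := by exact_mod_cast hn
  fin_cases i <;> simp only [monomialVector] <;> norm_num <;>
    first
    | positivity
    | (rw [div_lt_iff₀ hL]; linarith)

lemma sum_monomialVector (n : ℕ) : ∑ i, monomialVector n i = 1 := by
  simp only [Fin.sum_univ_five, monomialVector, Matrix.cons_val_zero, Matrix.cons_val_one,
    Matrix.cons_val_two, Matrix.cons_val_three, Matrix.cons_val_four, Matrix.head_cons,
    Matrix.tail_cons]
  ring

lemma tendsto_sub_div_affine (a c d : ℝ) {b : ℝ} (hb : 0 < b) :
    Tendsto (fun n : ℕ => a - c / (b * n + d)) atTop (𝓝 a) := by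
  have hden : Tendsto (fun n : ℕ => b * n + d) atTop atTop :=
    tendsto_atTop_add_const_right _ d (tendsto_natCast_atTop_atTop.const_mul_atTop hb)
  simpa using tendsto_const_nhds.sub (tendsto_const_nhds (x := c).div_atTop hden)

lemma tendsto_monomialVector (i : Fin 5) :
    Tendsto (fun n => monomialVector n i) atTop (𝓝 (![1/8, 1/2, 0, 1/4, 1/8] i)) := by
  fin_cases i <;> simp only [monomialVector] <;> norm_num
  · exact tendsto_sub_div_affine _ _ _ (by norm_num)
  · exact tendsto_sub_div_affine _ _ _ (by norm_num)
  · simpa [neg_div] using tendsto_sub_div_affine 0 (-3) 4 (b := 3) (by norm_num)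
  · exact tendsto_sub_div_affine _ _ _ (by norm_num)

theorem stmt_13 (A : Matrix (Fin 3) (Fin 5) ℝ)
    (hA : A = !![1,1,1,0,1; 1,1,0,0,1; 1,0,0,1,1])
    (θ : ℕ → Fin 3 → ℝ)
    (hθ : ∀ n : ℕ, θ n = ![3 / (3 * (n:ℝ) + 4), (n:ℝ) / 2, 1/4])
    (p : ℕ → Fin 5 → ℝ)
    (hp : ∀ n i, p n i = ∏ j, θ n j ^ A j i)
    (p₀ : Fin 5 → ℝ) (hp₀ : p₀ = ![1/8, 1/2, 0, 1/4, 1/8]) :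
    (∀ n : ℕ, 1 ≤ n → (∀ i, 0 < p n i) ∧ ∑ i, p n i = 1) ∧
    ∀ i, Filter.Tendsto (fun n => p n i) Filter.atTop (nhds (p₀ i)) := by
  have hp' : p = monomialVector := by
    funext n i
    rw [hp, hA, hθ, prod_rpow_eq_monomialVector]
  subst hp' hp₀
  exact ⟨fun n hn => ⟨monomialVector_pos hn, sum_monomialVector n⟩, tendsto_monomialVector⟩
end

section
/- Let A be a J×I 0-1 matrix with columns aᵢ, let F ⊆ {1,…,I} be a facial set (i.e. there exists c ∈ ℝ^J with c'aᵢ = 0 for i ∈ F and c'aᵢ > 0 for i ∉ F), let A_F be the submatrix of columns in F, and let δ_F ∈ X_{A_F}. Then the vector δ ∈ ℝ^I defined by δᵢ = (δ_F)ᵢ for i ∈ F and δᵢ = 0 for i ∉ F belongs to X_A. -/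
/-!
Off the facial set `F`, the weights `w = cᵀA` are positive, and `w ⬝ d = cᵀ(A d) = 0` for
`d ∈ ker A`. So `d` either vanishes off `F`, in which case it restricts to `ker A_F` and both
monomials only see `δ_F`, or it has a positive and a negative entry off `F`, where `δ = 0`, so both
monomials vanish.
-/

open Finset Matrix

lemma eq_zero_or_exists_pos_and_neg_of_sum_mul_eq_zero {ι : Type*} {s : Finset ι} {w d : ι → ℝ}
    (hw : ∀ i ∈ s, 0 < w i) (hsum : ∑ i ∈ s, w i * d i = 0) :
    (∀ i ∈ s, d i = 0) ∨ ((∃ i ∈ s, 0 < d i) ∧ ∃ i ∈ s, d i < 0) := by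
  have eq_zero_of_nonneg : ∀ e : ι → ℝ, ∑ i ∈ s, w i * e i = 0 → (∀ i ∈ s, 0 ≤ e i) →
      ∀ i ∈ s, e i = 0 := fun e he hnn i hi =>
    (mul_eq_zero.1 ((sum_eq_zero_iff_of_nonneg fun i hi =>
      mul_nonneg (hw i hi).le (hnn i hi)).1 he i hi)).resolve_left (hw i hi).ne'
  by_cases hneg : ∃ i ∈ s, d i < 0
  · by_cases hpos : ∃ i ∈ s, 0 < d i
    · exact Or.inr ⟨hpos, hneg⟩
    push Not at hpos
    refine Or.inl fun i hi => neg_eq_zero.1 (eq_zero_of_nonneg (-d) ?_ ?_ i hi)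
    · simp only [Pi.neg_apply, mul_neg, sum_neg_distrib, hsum, neg_zero]
    · exact fun i hi => neg_nonneg.2 (hpos i hi)
  push Not at hneg
  exact Or.inl (eq_zero_of_nonneg d hsum hneg)

lemma sum_compl_vecMul_mul_eq_zero {m ι R : Type*} [Fintype m] [Fintype ι] [DecidableEq ι]
    [CommSemiring R] {A : Matrix m ι R} {c : m → R} {F : Finset ι}
    (hF0 : ∀ i ∈ F, (c ᵥ* A) i = 0) {d : ι → R} (hd : A *ᵥ d = 0) :
    ∑ i ∈ Fᶜ, (c ᵥ* A) i * d i = 0 := by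
  have htotal : ∑ i, (c ᵥ* A) i * d i = 0 := by
    rw [← dotProduct, ← dotProduct_mulVec, hd, dotProduct_zero]
  rwa [← sum_compl_add_sum F, sum_eq_zero (s := F) fun i hi => by rw [hF0 i hi, zero_mul], add_zero]
    at htotal

lemma mulVec_submatrix_subtype_of_eq_zero {m ι R : Type*} [Fintype ι] [NonUnitalNonAssocSemiring R]
    (A : Matrix m ι R) (s : Finset ι) {d : ι → R} (hd : ∀ i ∉ s, d i = 0) :
    A.submatrix id (fun i : s => (i : ι)) *ᵥ (fun i => d i) = A *ᵥ d := by
  funext j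
  simp only [mulVec, dotProduct, submatrix_apply, id_eq]
  rw [sum_coe_sort s fun i => A j i * d i]
  exact sum_subset (subset_univ s) fun i _ hi => by rw [hd i hi, mul_zero]

lemma prod_rpow_eq_prod_subtype_of_eq_zero {ι : Type*} [Fintype ι] (s : Finset ι) {x e : ι → ℝ}
    (he : ∀ i ∉ s, e i = 0) : ∏ i, x i ^ e i = ∏ i : s, x i ^ e i := by
  rw [prod_coe_sort s fun i => x i ^ e i]
  exact (prod_subset (subset_univ s) fun i _ hi => by rw [he i hi, Real.rpow_zero]).symm

lemma prod_rpow_eq_zero_of_eq_zero_of_pos {ι : Type*} [Fintype ι] {x e : ι → ℝ} {i : ι}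
    (hx : x i = 0) (he : 0 < e i) : ∏ j, x j ^ e j = 0 :=
  prod_eq_zero (mem_univ i) (by rw [hx, Real.zero_rpow he.ne'])

theorem stmt_14_general {J I : ℕ} (A : Matrix (Fin J) (Fin I) ℝ)
    (F : Finset (Fin I)) (c : Fin J → ℝ)
    (hF0 : ∀ i ∈ F, ∑ j, c j * A j i = 0)
    (hF1 : ∀ i ∉ F, 0 < ∑ j, c j * A j i)
    (δF : {i // i ∈ F} → ℝ) (hδF : ∀ i, 0 ≤ δF i)
    (hXF : ∀ dF : {i // i ∈ F} → ℝ,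
      (A.submatrix id (fun i : {i // i ∈ F} => (i : Fin I))).mulVec dF = 0 →
      ∏ i, δF i ^ max (dF i) 0 = ∏ i, δF i ^ max (-dF i) 0)
    (δ : Fin I → ℝ)
    (hδ : ∀ i, δ i = if h : i ∈ F then δF ⟨i, h⟩ else 0) :
    (∀ i, 0 ≤ δ i) ∧
    ∀ d : Fin I → ℝ, A.mulVec d = 0 →
      ∏ i, δ i ^ max (d i) 0 = ∏ i, δ i ^ max (-d i) 0 := by
  have hδ_in (i : F) : δ i = δF i := by rw [hδ, dif_pos i.2]
  have hδ_out {i} (hi : i ∉ F) : δ i = 0 := by rw [hδ, dif_neg hi]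
  refine ⟨fun i => ?_, fun d hd => ?_⟩
  · by_cases hi : i ∈ F
    · exact hδ_in ⟨i, hi⟩ ▸ hδF _
    · exact (hδ_out hi).ge
  rcases eq_zero_or_exists_pos_and_neg_of_sum_mul_eq_zero
      (fun i hi => hF1 i (mem_compl.1 hi)) (sum_compl_vecMul_mul_eq_zero hF0 hd) with
    hvanish | ⟨⟨ip, hip, hpos⟩, ⟨im, him, hneg⟩⟩
  · have hvanish' : ∀ i ∉ F, d i = 0 := fun i hi => hvanish i (mem_compl.2 hi)
    rw [prod_rpow_eq_prod_subtype_of_eq_zero F fun i hi => by simp [hvanish' i hi],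
      prod_rpow_eq_prod_subtype_of_eq_zero F fun i hi => by simp [hvanish' i hi]]
    simp only [hδ_in]
    exact hXF _ ((mulVec_submatrix_subtype_of_eq_zero A F hvanish').trans hd)
  · rw [prod_rpow_eq_zero_of_eq_zero_of_pos (hδ_out (mem_compl.1 hip)) (lt_max_of_lt_left hpos),
      prod_rpow_eq_zero_of_eq_zero_of_pos (hδ_out (mem_compl.1 him))
        (lt_max_of_lt_left (neg_pos.2 hneg))]

theorem stmt_14 {J I : ℕ} (A : Matrix (Fin J) (Fin I) ℝ)
    (hA01 : ∀ j i, A j i = 0 ∨ A j i = 1)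
    (F : Finset (Fin I)) (c : Fin J → ℝ)
    (hF0 : ∀ i ∈ F, ∑ j, c j * A j i = 0)
    (hF1 : ∀ i ∉ F, 0 < ∑ j, c j * A j i)
    (δF : {i // i ∈ F} → ℝ) (hδF : ∀ i, 0 ≤ δF i)
    (hXF : ∀ dF : {i // i ∈ F} → ℝ,
      (A.submatrix id (fun i : {i // i ∈ F} => (i : Fin I))).mulVec dF = 0 →
      ∏ i, δF i ^ max (dF i) 0 = ∏ i, δF i ^ max (-dF i) 0)
    (δ : Fin I → ℝ)
    (hδ : ∀ i, δ i = if h : i ∈ F then δF ⟨i, h⟩ else 0) :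
    (∀ i, 0 ≤ δ i) ∧
    ∀ d : Fin I → ℝ, A.mulVec d = 0 →
      ∏ i, δ i ^ max (d i) 0 = ∏ i, δ i ^ max (-d i) 0 :=
  stmt_14_general A F c hF0 hF1 δF hδF hXF δ hδ
end

section
/- Let A be a J×I 0-1 matrix and q ∈ ℝ^I nonnegative. Suppose supp(q) is not contained in any facial set of A. Then Aq lies in the relative interior of the cone C_A = {Aδ : δ ≥ 0}; that is, there exists a strictly positive z ∈ ℝ^I with Az = Aq. -/
/-!
If no strictly positive `z` has `A z = A q`, the open positive orthant and the affine fibre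
`{z | A z = A q}` are disjoint convex sets, so Hahn–Banach separates them by a linear functional.
Being bounded on the fibre, the functional vanishes on `ker A` and is therefore `z ↦ c'A z`.
Being bounded below on the orthant forces `c'A ≥ 0` with `c'A ≠ 0`, and comparing with `q ≥ 0`
in the fibre forces `c'A q = 0`, i.e. `c'aᵢ = 0` on `supp q`. Then `{i | c'aᵢ = 0}` is a facial
set containing `supp q`.
-/

open Matrix

lemma nonneg_of_forall_le_mul {a u : ℝ} (h : ∀ t : ℝ, 0 ≤ t → u ≤ t * a) : 0 ≤ a := by
  by_contra! ha
  have hu := h ((|u| + 1) / -a) (div_nonneg (by positivity) (by linarith))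
  rw [div_mul_eq_mul_div, div_neg, mul_div_cancel_right₀ _ ha.ne] at hu
  linarith [neg_abs_le u]

lemma eq_zero_of_forall_le_add_mul {a b u : ℝ} (h : ∀ t : ℝ, u ≤ a + t * b) : b = 0 := by
  have hb : 0 ≤ b := nonneg_of_forall_le_mul (u := u - a) fun t _ => by linarith [h t]
  have hb' : 0 ≤ -b := nonneg_of_forall_le_mul (u := u - a) fun t _ => by linarith [h (-t)]
  linarith

theorem Matrix.exists_eq_vecMul_dotProduct_of_ker_le {K m n : Type*} [Field K] [Fintype m]
    [Fintype n] (A : Matrix m n K) (f : Module.Dual K (n → K))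
    (hf : LinearMap.ker A.mulVecLin ≤ LinearMap.ker f) :
    ∃ c : m → K, ∀ z, f z = (c ᵥ* A) ⬝ᵥ z := by
  classical
  obtain ⟨g, rfl⟩ : f ∈ LinearMap.range A.mulVecLin.dualMap := by
    rw [LinearMap.range_dualMap_eq_dualAnnihilator_ker, Submodule.mem_dualAnnihilator]
    exact fun z hz => hf hz
  refine ⟨fun j => g fun k => if j = k then 1 else 0, fun z => ?_⟩
  rw [← dotProduct_mulVec, LinearMap.dualMap_apply, mulVecLin_apply, g.pi_apply_eq_sum_univ,
    dotProduct]
  simp only [smul_eq_mul, mul_comm]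

theorem Matrix.exists_separating_of_forall_pos_mulVec_ne {m n : Type*} [Fintype m] [Fintype n]
    (A : Matrix m n ℝ) (q : n → ℝ) (hq : ∀ z : n → ℝ, (∀ i, 0 < z i) → A *ᵥ z ≠ A *ᵥ q) :
    ∃ (c : m → ℝ) (u : ℝ),
      (∀ z : n → ℝ, (∀ i, 0 < z i) → u < (c ᵥ* A) ⬝ᵥ z) ∧ (c ᵥ* A) ⬝ᵥ q ≤ u := by
  classical
  obtain ⟨f, u, hP, hV⟩ := geometric_hahn_banach_open
    (convex_pi fun _ _ => convex_Ioi 0) (isOpen_set_pi Set.finite_univ fun _ _ => isOpen_Ioi)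
    ((convex_singleton (A *ᵥ q)).linear_preimage A.mulVecLin)
    (Set.disjoint_left.2 fun z hz hzq => hq z (by simpa using hz) hzq)
  have hker : LinearMap.ker A.mulVecLin ≤ LinearMap.ker (f : (n → ℝ) →ₗ[ℝ] ℝ) := by
    intro w hw
    rw [LinearMap.mem_ker] at hw ⊢
    refine eq_zero_of_forall_le_add_mul (u := u) (a := f q) fun t => ?_
    simpa using hV (q + t • w) (by simp_all [mulVec_add, mulVec_smul])
  obtain ⟨c, hc⟩ := A.exists_eq_vecMul_dotProduct_of_ker_le _ hker
  refine ⟨-c, -u, fun z hz => ?_, ?_⟩ <;> simp only [neg_vecMul, neg_dotProduct, neg_lt_neg_iff,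
    neg_le_neg_iff, ← hc, ContinuousLinearMap.coe_coe]
  · exact hP z (by simpa using hz)
  · exact hV q rfl

lemma le_dotProduct_of_forall_pos_lt {n : Type*} [Fintype n] {s : n → ℝ} {u : ℝ}
    (h : ∀ z : n → ℝ, (∀ i, 0 < z i) → u < s ⬝ᵥ z) {z : n → ℝ} (hz : 0 ≤ z) : u ≤ s ⬝ᵥ z := by
  have hsub : closure (Set.univ.pi fun _ => Set.Ioi 0) ⊆ {z : n → ℝ | u ≤ s ⬝ᵥ z} :=
    closure_minimal (fun z hz => (h z (by simpa using hz)).le)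
      (isClosed_le continuous_const (continuous_const.dotProduct continuous_id))
  rw [closure_pi_set] at hsub
  exact hsub (Set.mem_univ_pi.2 fun i => by simpa [closure_Ioi] using hz i)

lemma nonneg_ne_zero_and_vanishes_on_support_of_separating {n : Type*} [Fintype n] {s q : n → ℝ}
    {u : ℝ} (hq : 0 ≤ q) (h : ∀ z : n → ℝ, (∀ i, 0 < z i) → u < s ⬝ᵥ z) (hsq : s ⬝ᵥ q ≤ u) :
    0 ≤ s ∧ s ≠ 0 ∧ ∀ i, 0 < q i → s i = 0 := by
  classical
  have hs : 0 ≤ s := fun i => nonneg_of_forall_le_mul fun t ht => by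
    simpa [mul_comm] using
      le_dotProduct_of_forall_pos_lt h (Pi.single_nonneg.2 ht : 0 ≤ Pi.single i t)
  have hu : u ≤ 0 := by simpa using le_dotProduct_of_forall_pos_lt h le_rfl
  have hsq0 : ∑ i, s i * q i = 0 :=
    le_antisymm (hsq.trans hu) (dotProduct_nonneg_of_nonneg hs hq)
  refine ⟨hs, ?_, fun i hi => ?_⟩
  · rintro rfl
    have := h 1 fun _ => one_pos
    simp only [zero_dotProduct] at this hsq
    linarith
  · have := (Finset.sum_eq_zero_iff_of_nonneg fun i _ => mul_nonneg (hs i) (hq i)).1 hsq0 i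
      (Finset.mem_univ i)
    exact (mul_eq_zero.1 this).resolve_right hi.ne'

theorem stmt_15_general {J I : ℕ} (A : Matrix (Fin J) (Fin I) ℝ)
    (q : Fin I → ℝ) (hq : ∀ i, 0 ≤ q i)
    (h : ¬ ∃ (F : Set (Fin I)) (c : Fin J → ℝ), F ≠ Set.univ ∧
      (∀ i ∈ F, ∑ j, c j * A j i = 0) ∧ (∀ i ∉ F, 0 < ∑ j, c j * A j i) ∧
      {i | 0 < q i} ⊆ F) :
    ∃ z : Fin I → ℝ, (∀ i, 0 < z i) ∧ A.mulVec z = A.mulVec q := by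
  by_contra! hne
  obtain ⟨c, u, hpos, hqu⟩ := A.exists_separating_of_forall_pos_mulVec_ne q hne
  obtain ⟨hs, hs0, hsupp⟩ := nonneg_ne_zero_and_vanishes_on_support_of_separating hq hpos hqu
  exact h ⟨{i | (c ᵥ* A) i = 0}, c, (Set.ne_univ_iff_exists_notMem _).2 (Function.ne_iff.1 hs0),
    fun i hi => hi, fun i hi => (hs i).lt_of_ne' hi, hsupp⟩

theorem stmt_15 {J I : ℕ} (A : Matrix (Fin J) (Fin I) ℝ)
    (hA01 : ∀ j i, A j i = 0 ∨ A j i = 1)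
    (q : Fin I → ℝ) (hq : ∀ i, 0 ≤ q i)
    (h : ¬ ∃ (F : Set (Fin I)) (c : Fin J → ℝ), F ≠ Set.univ ∧
      (∀ i ∈ F, ∑ j, c j * A j i = 0) ∧ (∀ i ∉ F, 0 < ∑ j, c j * A j i) ∧
      {i | 0 < q i} ⊆ F) :
    ∃ z : Fin I → ℝ, (∀ i, 0 < z i) ∧ A.mulVec z = A.mulVec q :=
  stmt_15_general A q hq h
end
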